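/- Let N ≥ 1, let −∞ = x_0 < x_1 < ⋯ < x_{N−1} < x_N = +∞ be a partition of ℝ, let c_1, …, c_N be real numbers, and let u : ℝ → ℝ be the right-continuous piecewise constant function defined by u(x) = c_i for x ∈ [x_{i−1}, x_i) (with u = c_1 on (−∞, x_1) and u = c_N on [x_{N−1}, +∞)). Then for every 0 < s ≤ 1, the s-fractional total variation of the function u equals the s-fractional total variation of the finite sequence (c_1, …, c_N): TV^s u = sup over all subsets {σ(1) < ⋯ < σ(k)} of {1, …, N} of Σ_{i=1}^{k−1} |c_{σ(i+1)} − c_{σ(i)}|^{1/s}. -/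

import Mathlib

open scoped ENNReal Classical

/-- The `s`-fractional total variation of a function `u : ℝ → ℝ`. -/
noncomputable def TVs (s : ℝ) (u : ℝ → ℝ) : ℝ≥0∞ :=
  ⨆ (n : ℕ) (x : Fin (n + 1) → ℝ) (_ : StrictMono x),
    ∑ i : Fin n, ENNReal.ofReal (|u (x i.succ) - u (x i.castSucc)| ^ (1 / s))

/-- The `s`-fractional total variation of a finite sequence `c 0, …, c (N-1)` of real
numbers: the supremum over all subdivisions (strictly increasing maps into `{0, …, N-1}`)
of the sum of `|c (σ (i+1)) - c (σ i)| ^ (1/s)`. -/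
noncomputable def TVsSeq (s : ℝ) (N : ℕ) (c : ℕ → ℝ) : ℝ≥0∞ :=
  ⨆ (k : ℕ) (σ : Fin (k + 1) → ℕ) (_ : StrictMono σ) (_ : ∀ i, σ i < N),
    ∑ i : Fin k, ENNReal.ofReal (|c (σ i.succ) - c (σ i.castSucc)| ^ (1 / s))

/-!
Write `u = c ∘ J`, where `J t` is the number of partition points `≤ t`; `J` is a monotone map
of `ℝ` onto `{0, …, N-1}`. Along a monotone map the `p`-variation can only drop: a strictly
increasing subdivision of `ℝ` becomes a weakly increasing sequence of indices, and repeated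
indices contribute `0 ^ p = 0`. Conversely a strictly increasing sequence of indices lifts,
through any choice of preimages under `J`, to a strictly increasing subdivision of `ℝ`.
-/

open Finset

noncomputable section

variable {α β : Type*}

def variationSum (p : ℝ) (f : α → ℝ) {k : ℕ} (σ : Fin (k + 1) → α) : ℝ≥0∞ :=
  ∑ i : Fin k, ENNReal.ofReal (|f (σ i.succ) - f (σ i.castSucc)| ^ p)

theorem variationSum_comp (p : ℝ) (f : β → ℝ) (J : α → β) {k : ℕ} (σ : Fin (k + 1) → α) :
    variationSum p (f ∘ J) σ = variationSum p f (J ∘ σ) :=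
  rfl

theorem variationSum_cons (p : ℝ) (f : α → ℝ) {k : ℕ} (a : α) (σ : Fin (k + 1) → α) :
    variationSum p f (Fin.cons a σ : Fin (k + 2) → α) =
      ENNReal.ofReal (|f (σ 0) - f a| ^ p) + variationSum p f σ := by
  simp [variationSum, Fin.sum_univ_succ]

theorem exists_strictMono_variationSum_eq [PartialOrder α] {p : ℝ} (hp : p ≠ 0) (f : α → ℝ) :
    ∀ {k : ℕ} (σ : Fin (k + 1) → α), Monotone σ →
      ∃ (k' : ℕ) (τ : Fin (k' + 1) → α), StrictMono τ ∧ τ 0 = σ 0 ∧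
        (∀ i, τ i ∈ Set.range σ) ∧ variationSum p f τ = variationSum p f σ
  | 0, σ, _ => ⟨0, σ, Fin.strictMono_iff_lt_succ.2 fun i => i.elim0, rfl, fun i => ⟨i, rfl⟩, rfl⟩
  | k + 1, σ, hσ => by
    obtain ⟨a, σ, rfl⟩ : ∃ a σ', σ = Fin.cons a σ' :=
      ⟨σ 0, Fin.tail σ, (Fin.cons_self_tail σ).symm⟩
    obtain ⟨k', τ, hτ, hτ0, hτσ, hτsum⟩ :=
      exists_strictMono_variationSum_eq hp f σ (by simpa using hσ.comp Fin.strictMono_succ.monotone)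
    have haσ : a ≤ σ 0 := by simpa using hσ (Fin.zero_le 1)
    have hrange : Set.range σ ⊆ Set.range (Fin.cons a σ : Fin (k + 2) → α) := by
      simp [Fin.range_cons]
    rcases haσ.eq_or_lt with rfl | hlt
    · refine ⟨k', τ, hτ, by simpa using hτ0, fun i => hrange (hτσ i), ?_⟩
      simp [variationSum_cons, hτsum, Real.zero_rpow hp]
    · refine ⟨k' + 1, Fin.cons a τ, ?_, rfl, ?_, ?_⟩
      · exact Fin.strictMono_cons.2
          ⟨fun j => hlt.trans_le (hτ0 ▸ hτ.monotone (Fin.zero_le j)), hτ⟩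
      · refine Fin.cases ⟨0, rfl⟩ fun i => ?_
        simpa using hrange (hτσ i)
      · rw [variationSum_cons, variationSum_cons, hτ0, hτsum]

def pVariationOn [Preorder α] (p : ℝ) (f : α → ℝ) (S : Set α) : ℝ≥0∞ :=
  ⨆ (k : ℕ) (σ : Fin (k + 1) → α) (_ : StrictMono σ) (_ : ∀ i, σ i ∈ S), variationSum p f σ

theorem variationSum_le_pVariationOn [Preorder α] (p : ℝ) (f : α → ℝ) {S : Set α} {k : ℕ}
    {σ : Fin (k + 1) → α} (hσ : StrictMono σ) (hσS : ∀ i, σ i ∈ S) :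
    variationSum p f σ ≤ pVariationOn p f S :=
  le_iSup₂_of_le k σ <| le_iSup₂_of_le hσ hσS le_rfl

theorem variationSum_le_pVariationOn_of_monotone [PartialOrder α] {p : ℝ} (hp : p ≠ 0)
    (f : α → ℝ) {S : Set α} {k : ℕ} {σ : Fin (k + 1) → α} (hσ : Monotone σ)
    (hσS : ∀ i, σ i ∈ S) : variationSum p f σ ≤ pVariationOn p f S := by
  obtain ⟨k', τ, hτ, -, hτσ, hτsum⟩ := exists_strictMono_variationSum_eq hp f σ hσ
  rw [← hτsum]
  refine variationSum_le_pVariationOn p f hτ fun i => ?_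
  obtain ⟨j, hj⟩ := hτσ i
  exact hj ▸ hσS j

theorem pVariationOn_comp_le [Preorder α] [PartialOrder β] {p : ℝ} (hp : p ≠ 0) (f : β → ℝ)
    {J : α → β} (hJ : Monotone J) {S : Set α} {T : Set β} (hST : Set.MapsTo J S T) :
    pVariationOn p (f ∘ J) S ≤ pVariationOn p f T := by
  refine iSup_le fun k => iSup_le fun σ => iSup_le fun hσ => iSup_le fun hσS => ?_
  rw [variationSum_comp]
  exact variationSum_le_pVariationOn_of_monotone hp f (hJ.comp hσ.monotone) fun i => hST (hσS i)

theorem le_pVariationOn_comp [LinearOrder α] [Preorder β] (p : ℝ) (f : β → ℝ)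
    {J : α → β} (hJ : Monotone J) {S : Set α} {T : Set β} (hST : Set.SurjOn J S T) :
    pVariationOn p f T ≤ pVariationOn p (f ∘ J) S := by
  refine iSup_le fun k => iSup_le fun σ => iSup_le fun hσ => iSup_le fun hσT => ?_
  choose r hrS hr using fun i => hST (hσT i)
  have hrmono : StrictMono r := fun i j hij =>
    lt_of_not_ge fun hji => (hσ hij).not_ge (hr i ▸ hr j ▸ hJ hji)
  rw [show σ = J ∘ r from (funext hr).symm, ← variationSum_comp]
  exact variationSum_le_pVariationOn p (f ∘ J) hrmono hrS

theorem pVariationOn_comp [LinearOrder α] [PartialOrder β] {p : ℝ} (hp : p ≠ 0) (f : β → ℝ)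
    {J : α → β} (hJ : Monotone J) {S : Set α} {T : Set β} (hmaps : Set.MapsTo J S T)
    (hsurj : Set.SurjOn J S T) : pVariationOn p (f ∘ J) S = pVariationOn p f T :=
  (pVariationOn_comp_le hp f hJ hmaps).antisymm (le_pVariationOn_comp p f hJ hsurj)

theorem monotone_card_filter_le [LinearOrder α] {ι : Type*} (s : Finset ι) (x : ι → α) :
    Monotone fun t => #{i ∈ s | x i ≤ t} :=
  fun _ _ hab => card_le_card <| monotone_filter_right s fun _ _ hi => hi.trans hab

section Counting

variable [LinearOrder α] {x : ℕ → α} {n : ℕ}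

theorem mapsTo_card_filter_le :
    Set.MapsTo (fun t => #{i ∈ range n | x i ≤ t}) Set.univ (Set.Iio (n + 1)) :=
  fun _ _ => Nat.lt_succ_of_le <| (card_filter_le _ _).trans (card_range n).le

theorem card_filter_le_apply (hx : StrictMonoOn x (Set.Iio n)) {m : ℕ} (hm : m < n) :
    #{i ∈ range n | x i ≤ x m} = m + 1 := by
  have : {i ∈ range n | x i ≤ x m} = range (m + 1) := by
    ext i
    simp only [mem_filter, mem_range]
    constructor
    · rintro ⟨hi, hle⟩
      exact Nat.lt_succ_of_le ((hx.le_iff_le hi hm).1 hle)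
    · intro hi
      exact ⟨by omega, (hx.le_iff_le (Set.mem_Iio.2 (by omega)) hm).2 (by omega)⟩
  rw [this, card_range]

theorem card_filter_le_eq_zero (hx : StrictMonoOn x (Set.Iio n)) {t : α} (ht : t < x 0) :
    #{i ∈ range n | x i ≤ t} = 0 := by
  refine card_eq_zero.2 <| filter_eq_empty_iff.2 fun i hi hle => ?_
  have hi : i < n := mem_range.1 hi
  exact ht.not_ge <| (hx.monotoneOn (Set.mem_Iio.2 (by omega)) hi (Nat.zero_le i)).trans hle

theorem surjOn_card_filter_le [NoMinOrder α] (hx : StrictMonoOn x (Set.Iio n)) :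
    Set.SurjOn (fun t => #{i ∈ range n | x i ≤ t}) Set.univ (Set.Iio (n + 1)) := by
  rintro (_ | m) hm
  · obtain ⟨t, ht⟩ := exists_lt (x 0)
    exact ⟨t, Set.mem_univ t, card_filter_le_eq_zero hx ht⟩
  · exact ⟨x m, Set.mem_univ _, card_filter_le_apply hx (by simpa using hm)⟩

end Counting

theorem TVs_eq_pVariationOn (s : ℝ) (u : ℝ → ℝ) : TVs s u = pVariationOn (1 / s) u Set.univ := by
  simp [TVs, pVariationOn, variationSum]

theorem TVsSeq_eq_pVariationOn (s : ℝ) (N : ℕ) (c : ℕ → ℝ) :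
    TVsSeq s N c = pVariationOn (1 / s) c (Set.Iio N) :=
  rfl

end

theorem tvs_piecewise_constant_general (N : ℕ) (hN : 1 ≤ N) (x : ℕ → ℝ)
    (hx : StrictMonoOn x (Set.Iio (N - 1))) (c : ℕ → ℝ)
    (s : ℝ) (hs0 : 0 < s) (u : ℝ → ℝ)
    (hu : ∀ t : ℝ, u t = c ((Finset.range (N - 1)).filter (fun i => x i ≤ t)).card) :
    TVs s u = TVsSeq s N c := by
  obtain ⟨n, rfl⟩ : ∃ n, N = n + 1 := ⟨N - 1, by omega⟩
  rw [Nat.add_sub_cancel] at hx hu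
  rw [TVs_eq_pVariationOn, TVsSeq_eq_pVariationOn, funext hu]
  exact pVariationOn_comp (one_div_ne_zero hs0.ne') c (monotone_card_filter_le _ x)
    mapsTo_card_filter_le (surjOn_card_filter_le hx)

/-- For the right-continuous piecewise constant function `u` which takes the value `c 0`
on `(-∞, x 0)`, the value `c i` on `[x (i-1), x i)` for `1 ≤ i ≤ N - 2`, and the value
`c (N-1)` on `[x (N-2), +∞)`, where `x 0 < x 1 < ⋯ < x (N-2)` are the (interior) partition
points — here encoded by `u t = c j` where `j` is the number of partition points `≤ t` —
the `s`-fractional total variation of the function `u` equals the `s`-fractional total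
variation of the finite sequence `(c 0, …, c (N-1))`. -/
theorem tvs_piecewise_constant (N : ℕ) (hN : 1 ≤ N) (x : ℕ → ℝ)
    (hx : StrictMonoOn x (Set.Iio (N - 1))) (c : ℕ → ℝ)
    (s : ℝ) (hs0 : 0 < s) (hs1 : s ≤ 1) (u : ℝ → ℝ)
    (hu : ∀ t : ℝ, u t = c ((Finset.range (N - 1)).filter (fun i => x i ≤ t)).card) :
    TVs s u = TVsSeq s N c :=
  tvs_piecewise_constant_general N hN x hx c s hs0 u hu
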